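/- arXiv:2305.19887 — 7 statements merged into one kernel-verified Lean document; each statement's English description precedes it below -/
import Mathlib

section
/- The function ρ is continuous on the open positive quadrant {(x,y) : x > 0, y > 0}. -/
noncomputable def rho (x y : ℝ) : ℝ :=
  if x = y then x else x * y * (Real.log x - Real.log y) / (x - y)

/-! On the diagonal ρ is continued by the derivative of `log`: `ρ x y = x * y * dslope log x y`.
The divided difference `dslope f x y` of a `C¹` function is jointly continuous: off the diagonal
it is a quotient of continuous functions, and near a diagonal point `(a, a)` the off-diagonal
values tend to `f' a` by strict differentiability, while the diagonal values `f' x` do so by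
continuity of `f'`. -/

open Filter Set Topology

section Slope

variable {𝕜 E : Type*} [NontriviallyNormedField 𝕜] [NormedAddCommGroup E] [NormedSpace 𝕜 E]
  {f : 𝕜 → E} {f' : E} {a b : 𝕜}

theorem HasStrictDerivAt.tendsto_slope (hf : HasStrictDerivAt f f' a) :
    Tendsto (fun p : 𝕜 × 𝕜 => slope f p.1 p.2) (𝓝[{p | p.1 ≠ p.2}] (a, a)) (𝓝 f') := by
  have hquot := (hasDerivAtFilter_iff_isLittleO.mp hf).tendsto_inv_smul_nhds_zero
  rw [← tendsto_sub_nhds_zero_iff]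
  refine (hquot.mono_left nhdsWithin_le_nhds).congr' ?_
  filter_upwards [self_mem_nhdsWithin] with p (hp : p.1 ≠ p.2)
  rw [slope_comm, slope_def_module, smul_sub, smul_smul, inv_mul_cancel₀ (sub_ne_zero.mpr hp),
    one_smul]

theorem HasStrictDerivAt.continuousAt_uncurry_dslope (hf : HasStrictDerivAt f (deriv f a) a)
    (hf' : ContinuousAt (deriv f) a) :
    ContinuousAt (fun p : 𝕜 × 𝕜 => dslope f p.1 p.2) (a, a) := by
  classical
  simp only [ContinuousAt, dslope_same]
  simp only [dslope, Function.update_apply]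
  refine Tendsto.if ?_ ?_
  · exact (hf'.tendsto.comp (continuous_fst.tendsto (a, a))).mono_left inf_le_left
  · simp only [ne_comm]
    exact hf.tendsto_slope

theorem continuousAt_uncurry_dslope_of_ne (hab : a ≠ b) (ha : ContinuousAt f a)
    (hb : ContinuousAt f b) :
    ContinuousAt (fun p : 𝕜 × 𝕜 => dslope f p.1 p.2) (a, b) := by
  have hslope : ContinuousAt (fun p : 𝕜 × 𝕜 => (p.2 - p.1)⁻¹ • (f p.2 - f p.1)) (a, b) :=
    ((continuousAt_snd.sub continuousAt_fst).inv₀ (sub_ne_zero.mpr hab.symm)).smul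
      ((hb.comp continuousAt_snd).sub (ha.comp continuousAt_fst))
  refine hslope.congr ?_
  filter_upwards [(isOpen_ne_fun continuous_fst continuous_snd).mem_nhds hab] with p hp
  rw [dslope_of_ne _ (Ne.symm hp), slope_def_module]

end Slope

theorem ContDiffOn.continuousOn_uncurry_dslope {𝕜 E : Type*} [RCLike 𝕜] [NormedAddCommGroup E]
    [NormedSpace 𝕜 E] {f : 𝕜 → E} {U : Set 𝕜} (hf : ContDiffOn 𝕜 1 f U) (hU : IsOpen U) :
    ContinuousOn (fun p : 𝕜 × 𝕜 => dslope f p.1 p.2) (U ×ˢ U) := by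
  rintro ⟨a, b⟩ ⟨ha, hb⟩
  replace ha := hU.mem_nhds ha
  refine ContinuousAt.continuousWithinAt ?_
  obtain rfl | hab := eq_or_ne a b
  · exact ((hf.contDiffAt ha).hasStrictDerivAt one_ne_zero).continuousAt_uncurry_dslope
      ((hf.continuousOn_deriv_of_isOpen hU le_rfl).continuousAt ha)
  · exact continuousAt_uncurry_dslope_of_ne hab (hf.continuousOn.continuousAt ha)
      (hf.continuousOn.continuousAt (hU.mem_nhds hb))

theorem rho_eq_mul_dslope_log {x : ℝ} (hx : x ≠ 0) (y : ℝ) :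
    rho x y = x * y * dslope Real.log x y := by
  obtain rfl | hxy := eq_or_ne x y
  · rw [rho, if_pos rfl, dslope_same, Real.deriv_log, mul_assoc, mul_inv_cancel₀ hx, mul_one]
  · rw [rho, if_neg hxy, dslope_of_ne _ hxy.symm, slope_def_field, mul_div_assoc,
      ← neg_div_neg_eq, neg_sub, neg_sub]

theorem rho_continuousOn :
    ContinuousOn (fun p : ℝ × ℝ => rho p.1 p.2)
      {p : ℝ × ℝ | 0 < p.1 ∧ 0 < p.2} := by
  have hlog : ContinuousOn (fun p : ℝ × ℝ => dslope Real.log p.1 p.2) (Ioi 0 ×ˢ Ioi 0) :=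
    (Real.contDiffOn_log.mono fun _ hx => (mem_Ioi.mp hx).ne').continuousOn_uncurry_dslope
      isOpen_Ioi
  exact ((continuous_fst.mul continuous_snd).continuousOn.mul hlog).congr
    fun p hp => rho_eq_mul_dslope_log hp.1.ne' p.2
end

section
/- The function ρ is monotone increasing: if 0 < x₁ ≤ y₁ and 0 < x₂ ≤ y₂ then ρ(x₁,x₂) ≤ ρ(y₁,y₂). -/
/-! Since `(log a - log b) / (a - b) = ∫₀¹ (t a + (1 - t) b)⁻¹ dt`, taking `a = x⁻¹`, `b = y⁻¹`
writes `ρ(x, y)` as the average over `t ∈ [0, 1]` of the weighted harmonic means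
`(t x⁻¹ + (1 - t) y⁻¹)⁻¹`, each of which is monotone in `(x, y)`. -/

open Real Set

lemma convexCombo_pos {a b t : ℝ} (ha : 0 < a) (hb : 0 < b) (ht : t ∈ Icc (0 : ℝ) 1) :
    0 < t * a + (1 - t) * b := by
  simpa using convex_Ioi (0 : ℝ) ha hb ht.1 (sub_nonneg.2 ht.2) (add_sub_cancel t 1)

lemma intervalIntegrable_inv_convexCombo {a b : ℝ} (ha : 0 < a) (hb : 0 < b) :
    IntervalIntegrable (fun t : ℝ => (t * a + (1 - t) * b)⁻¹) MeasureTheory.volume 0 1 := by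
  refine ContinuousOn.intervalIntegrable ?_
  rw [uIcc_of_le zero_le_one]
  exact ContinuousOn.inv₀ (by fun_prop) fun t ht => (convexCombo_pos ha hb ht).ne'

lemma integral_inv_convexCombo {a b : ℝ} (ha : 0 < a) (hb : 0 < b) (hab : a ≠ b) :
    ∫ t in (0 : ℝ)..1, (t * a + (1 - t) * b)⁻¹ = (log a - log b) / (a - b) := by
  have affine : (fun t : ℝ => (t * a + (1 - t) * b)⁻¹) = fun t => ((a - b) * t + b)⁻¹ := by
    ext t; ring_nf
  rw [affine, intervalIntegral.integral_comp_mul_add (fun u => u⁻¹) (sub_ne_zero.2 hab)]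
  simp only [mul_zero, zero_add, mul_one, sub_add_cancel, smul_eq_mul]
  rw [integral_inv_of_pos hb ha, log_div ha.ne' hb.ne', inv_mul_eq_div]

lemma rho_eq_integral {x y : ℝ} (hx : 0 < x) (hy : 0 < y) :
    rho x y = ∫ t in (0 : ℝ)..1, (t * x⁻¹ + (1 - t) * y⁻¹)⁻¹ := by
  by_cases hxy : x = y
  · subst hxy
    simp [rho, ← add_mul]
  · rw [integral_inv_convexCombo (inv_pos.2 hx) (inv_pos.2 hy) (inv_injective.ne hxy),
      rho, if_neg hxy, log_inv, log_inv]
    have : y - x ≠ 0 := sub_ne_zero.2 (Ne.symm hxy)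
    field_simp
    ring

theorem rho_monotone (x₁ y₁ x₂ y₂ : ℝ) (hx₁ : 0 < x₁) (h₁ : x₁ ≤ y₁)
    (hx₂ : 0 < x₂) (h₂ : x₂ ≤ y₂) :
    rho x₁ x₂ ≤ rho y₁ y₂ := by
  have hy₁ : 0 < y₁ := hx₁.trans_le h₁
  have hy₂ : 0 < y₂ := hx₂.trans_le h₂
  rw [rho_eq_integral hx₁ hx₂, rho_eq_integral hy₁ hy₂]
  refine intervalIntegral.integral_mono_on zero_le_one
    (intervalIntegrable_inv_convexCombo (inv_pos.2 hx₁) (inv_pos.2 hx₂))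
    (intervalIntegrable_inv_convexCombo (inv_pos.2 hy₁) (inv_pos.2 hy₂)) fun t ht => ?_
  have ht₀ : 0 ≤ t := ht.1
  have ht₁ : 0 ≤ 1 - t := sub_nonneg.2 ht.2
  refine inv_anti₀ (convexCombo_pos (inv_pos.2 hy₁) (inv_pos.2 hy₂) ht) ?_
  gcongr
end

section
/- For positive x and y, ρ(x,y) = y·f(x/y) where f(t) = t·ln(t)/(t-1) for t > 0, t ≠ 1, and f(1) = 1; moreover f is continuous and strictly increasing on (0,∞). -/
noncomputable def f (t : ℝ) : ℝ :=
  if t = 1 then 1 else t * Real.log t / (t - 1)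

open Set Filter Topology

theorem strictMonoOn_Ioi_of_deriv_pos_of_ne {g : ℝ → ℝ} {a c : ℝ} (hac : a < c)
    (hg : ContinuousOn g (Ioi a)) (hg' : ∀ x, a < x → x ≠ c → 0 < deriv g x) :
    StrictMonoOn g (Ioi a) := by
  rw [← Ioc_union_Ici_eq_Ioi hac]
  refine StrictMonoOn.union ?_ ?_ (isGreatest_Ioc hac) isLeast_Ici
  · refine strictMonoOn_of_deriv_pos (convex_Ioc a c) (hg.mono Ioc_subset_Ioi_self) ?_
    rw [interior_Ioc]
    exact fun x hx => hg' x hx.1 hx.2.ne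
  · refine strictMonoOn_of_deriv_pos (convex_Ici c)
      (hg.mono fun x hx => hac.trans_le hx) ?_
    rw [interior_Ici]
    exact fun x hx => hg' x (hac.trans hx) hx.ne'

theorem rho_eq_mul_f {x y : ℝ} (hx : 0 < x) (hy : 0 < y) : rho x y = y * f (x / y) := by
  rcases eq_or_ne x y with rfl | hne
  · simp [rho, f, div_self hy.ne']
  · have hdiv : x / y ≠ 1 := fun h => hne ((div_eq_one_iff_eq hy.ne').1 h)
    rw [rho, f, if_neg hne, if_neg hdiv, Real.log_div hx.ne' hy.ne']
    field_simp

theorem f_eventuallyEq_of_ne_one {t : ℝ} (ht : t ≠ 1) :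
    f =ᶠ[𝓝 t] fun s => s * Real.log s / (s - 1) := by
  filter_upwards [eventually_ne_nhds ht] with s hs
  simp [f, hs]

theorem continuousAt_f_of_ne_one {t : ℝ} (ht₀ : 0 < t) (ht : t ≠ 1) : ContinuousAt f t :=
  ((continuousAt_id.mul (Real.continuousAt_log ht₀.ne')).div
    (continuousAt_id.sub continuousAt_const) (sub_ne_zero.2 ht)).congr
    (f_eventuallyEq_of_ne_one ht).symm

theorem continuousAt_f_one : ContinuousAt f 1 := by
  rw [← continuousWithinAt_compl_self, ContinuousWithinAt, show f 1 = 1 by simp [f]]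
  have hslope := (hasDerivAt_iff_tendsto_slope.1 (Real.hasDerivAt_log one_ne_zero))
  have hlim : Tendsto (fun t => t * slope Real.log 1 t) (𝓝[≠] 1) (𝓝 (1 * 1⁻¹)) :=
    (tendsto_id.mono_left nhdsWithin_le_nhds).mul hslope
  rw [one_mul, inv_one] at hlim
  refine hlim.congr' ?_
  filter_upwards [self_mem_nhdsWithin] with t (ht : t ≠ 1)
  rw [f, if_neg ht, slope_def_field, Real.log_one, sub_zero, mul_div_assoc]

theorem continuousOn_f : ContinuousOn f (Ioi 0) := by
  intro t ht
  rcases eq_or_ne t 1 with rfl | hne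
  · exact continuousAt_f_one.continuousWithinAt
  · exact (continuousAt_f_of_ne_one ht hne).continuousWithinAt

theorem hasDerivAt_f {t : ℝ} (ht₀ : 0 < t) (ht : t ≠ 1) :
    HasDerivAt f ((t - 1 - Real.log t) / (t - 1) ^ 2) t := by
  have hquot := (Real.hasDerivAt_mul_log ht₀.ne').div (hasDerivAt_id' t |>.sub_const 1)
    (sub_ne_zero.2 ht)
  rw [show ((Real.log t + 1) * (t - 1) - t * Real.log t * 1) / (t - 1) ^ 2
      = (t - 1 - Real.log t) / (t - 1) ^ 2 by ring] at hquot
  exact hquot.congr_of_eventuallyEq (f_eventuallyEq_of_ne_one ht)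

theorem deriv_f_pos {t : ℝ} (ht₀ : 0 < t) (ht : t ≠ 1) : 0 < deriv f t := by
  rw [(hasDerivAt_f ht₀ ht).deriv]
  have hden : t - 1 ≠ 0 := sub_ne_zero.2 ht
  exact div_pos (by linarith [Real.log_lt_sub_one_of_pos ht₀ ht]) (by positivity)

theorem rho_eq_f_and_f_props :
    (∀ x y : ℝ, 0 < x → 0 < y → rho x y = y * f (x / y)) ∧
    ContinuousOn f (Set.Ioi (0 : ℝ)) ∧
    StrictMonoOn f (Set.Ioi (0 : ℝ)) :=
  ⟨fun _ _ hx hy => rho_eq_mul_f hx hy, continuousOn_f,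
    strictMonoOn_Ioi_of_deriv_pos_of_ne one_pos continuousOn_f fun _ ht₀ ht => deriv_f_pos ht₀ ht⟩
end

section
/- The function t ↦ e^{W₀(t)} is strictly concave on [0,∞), where W₀ is the principal branch of the Lambert W function. -/
/-! The function `exp ∘ W₀` is the inverse on `[0, ∞)` of `y ↦ y log y` on `[1, ∞)`, a strictly convex,
increasing function; the inverse of such a function is strictly concave. -/

open Set

theorem StrictConvexOn.strictConcaveOn_of_leftInvOn {𝕜 E β : Type*} [Semiring 𝕜] [PartialOrder 𝕜]
    [AddCommMonoid E] [PartialOrder E] [SMul 𝕜 E] [AddCommMonoid β] [LinearOrder β] [SMul 𝕜 β]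
    {s : Set E} {t : Set β} {f : E → β} {g : β → E} (hs : Convex 𝕜 s)
    (hg : StrictConvexOn 𝕜 t g) (hg_mono : MonotoneOn g t) (hf : MapsTo f s t)
    (hgf : LeftInvOn g f s) : StrictConcaveOn 𝕜 s f := by
  refine ⟨hs, fun x hx y hy hxy a b ha hb hab => ?_⟩
  have hfxy : f x ≠ f y := fun h => hxy (by rw [← hgf hx, ← hgf hy, h])
  have hz : a • x + b • y ∈ s := hs hx hy ha.le hb.le hab
  have hlt : g (a • f x + b • f y) < g (f (a • x + b • y)) := by
    simpa only [hgf hx, hgf hy, hgf hz] using hg.2 (hf hx) (hf hy) hfxy ha hb hab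
  by_contra! hle
  exact (hg_mono (hf hz) (hg.1 (hf hx) (hf hy) ha.le hb.le hab) hle).not_gt hlt

theorem Real.monotoneOn_mul_log : MonotoneOn (fun x : ℝ => x * Real.log x) (Ici 1) :=
  fun _ hp _ hq hpq => mul_le_mul hpq (Real.log_le_log (zero_lt_one.trans_le hp) hpq)
    (Real.log_nonneg hp) (zero_le_one.trans hq)

theorem expW_strictConcave (W : ℝ → ℝ)
    (hW0 : ∀ t : ℝ, 0 ≤ t → 0 ≤ W t)
    (hW : ∀ t : ℝ, 0 ≤ t → W t * Real.exp (W t) = t) :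
    StrictConcaveOn ℝ (Set.Ici (0 : ℝ)) (fun t => Real.exp (W t)) := by
  have hg : StrictConvexOn ℝ (Ici 1) fun y : ℝ => y * Real.log y :=
    Real.strictConvexOn_mul_log.subset (Ici_subset_Ici.2 zero_le_one) (convex_Ici 1)
  refine hg.strictConcaveOn_of_leftInvOn (convex_Ici 0) Real.monotoneOn_mul_log
    (fun t ht => Real.one_le_exp (hW0 t ht)) fun t ht => ?_
  simp only [Real.log_exp, mul_comm (Real.exp (W t))]
  exact hW t ht
end

section
/- For all p with 0 < p < 1, it holds that 1 - e^{1 - 1/p} < (4/3)·(1 - p). -/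
/-! Put `t = 1/p - 1`, so that the claim becomes `(3 - t) / (3 (1 + t)) < exp (-t)`, which is only
non-trivial for `t < 3`. There the Padé bound `exp x < (2 + x) / (2 - x)` at `x = t/2` gives
`exp t < ((4 + t) / (4 - t))²`, and `((4 + t) / (4 - t))² ≤ 3 (1 + t) / (3 - t)` because the
difference of the cross products is `4 t (t - 2)²`. -/

open Real

lemma sq_four_add_div_four_sub_le {t : ℝ} (ht0 : 0 ≤ t) (ht3 : t < 3) :
    ((4 + t) / (4 - t)) ^ 2 ≤ 3 * (1 + t) / (3 - t) := by
  rw [div_pow, div_le_div_iff₀ (by nlinarith) (by linarith)]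
  nlinarith [mul_nonneg ht0 (sq_nonneg (t - 2))]

lemma exp_lt_three_mul_one_add_div_three_sub {t : ℝ} (ht0 : 0 < t) (ht3 : t < 3) :
    exp t < 3 * (1 + t) / (3 - t) :=
  calc exp t = exp (t / 2) ^ 2 := by rw [← exp_nat_mul]; ring_nf
    _ < ((2 + t / 2) / (2 - t / 2)) ^ 2 := by
      gcongr
      exact exp_lt_two_add_div_two_sub (by linarith) (by linarith)
    _ = ((4 + t) / (4 - t)) ^ 2 := by
      rw [← mul_div_mul_left _ (2 - t / 2) two_ne_zero]
      ring_nf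
    _ ≤ 3 * (1 + t) / (3 - t) := sq_four_add_div_four_sub_le ht0.le ht3

theorem ineq_two (p : ℝ) (hp0 : 0 < p) (hp1 : p < 1) :
    1 - Real.exp (1 - 1 / p) < 4 / 3 * (1 - p) := by
  suffices (4 * p - 1) / 3 < exp (1 - 1 / p) by linarith
  rcases le_or_gt (4 * p) 1 with hp | hp
  · exact lt_of_le_of_lt (by linarith) (exp_pos _)
  set t := 1 / p - 1 with ht
  have ht0 : 0 < t := by rw [ht, sub_pos, lt_div_iff₀ hp0]; linarith
  have ht3 : t < 3 := by rw [ht, sub_lt_iff_lt_add, div_lt_iff₀ hp0]; linarith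
  have hbound : (3 - t) / (3 * (1 + t)) < exp (-t) := by
    rw [exp_neg, ← inv_div]
    exact inv_strictAnti₀ (exp_pos t) (exp_lt_three_mul_one_add_div_three_sub ht0 ht3)
  convert hbound using 1
  · rw [ht]; field_simp; ring
  · rw [ht]; ring_nf
end

section
/- Let P = [[p, 1-p],[1-p, p]] with 0 < p < 1 and Q(k) = k·(P - I) for the 2×2 identity I. Then ‖P - exp(Q(1/p))‖_∞ < ‖P - exp(Q(ln(p)/(p-1)))‖_∞, where ‖·‖_∞ is the maximum absolute row sum norm. -/
/-!
The generator is `k (P - I) = s A` with `s = k (1 - p)` and `A = !![-1, 1; 1, -1]`, and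
`exp (s • A)` is again symmetric stochastic, with diagonal `(1 + e^{-2s}) / 2`. The row-sum
distance between symmetric stochastic matrices with diagonals `a`, `b` is `2 |a - b|`. For
`k = log p / (p - 1)` one gets `e^{-2s} = p²` and distance `(1 - p)²`; for `k = 1 / p`, with
`t = e^{-2(1-p)/p}`, the distance is `|2p - 1 - t|`. Now `t < p²` is `log p > 1 - 1/p`, and
`t > 2p - 1 - (1 - p)²` follows by squaring `e^{-x} ≥ 1 - x`.
-/

open Matrix

noncomputable def rowSumNorm (M : Matrix (Fin 2) (Fin 2) ℝ) : ℝ :=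
  max (|M 0 0| + |M 0 1|) (|M 1 0| + |M 1 1|)

def symmStochastic (a : ℝ) : Matrix (Fin 2) (Fin 2) ℝ := !![a, 1 - a; 1 - a, a]

lemma symmStochastic_sub_one (a : ℝ) :
    symmStochastic a - 1 = (1 - a) • !![-1, 1; 1, -1] := by
  ext i j
  fin_cases i <;> fin_cases j <;> simp [symmStochastic]

/-- `U` diagonalises the generator: `(1, 1)` and `(1, -1)` are eigenvectors for `0` and `-2`. -/
lemma exp_smul_twoStateGenerator (s : ℝ) :
    NormedSpace.exp (s • !![(-1 : ℝ), 1; 1, -1])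
      = symmStochastic ((1 + Real.exp (-2 * s)) / 2) := by
  set U : Matrix (Fin 2) (Fin 2) ℝ := !![1, 1; 1, -1]
  have hUinv : U⁻¹ = !![1 / 2, 1 / 2; 1 / 2, -(1 / 2)] := by
    apply inv_eq_right_inv
    ext i j
    fin_cases i <;> fin_cases j <;> norm_num [U]
  have hU : IsUnit U := by
    rw [isUnit_iff_isUnit_det]
    norm_num [U, det_fin_two_of]
  have hdiag : s • !![(-1 : ℝ), 1; 1, -1] = U * diagonal ![0, -2 * s] * U⁻¹ := by
    rw [hUinv]
    ext i j
    fin_cases i <;> fin_cases j <;> simp [U, mul_apply, Fin.sum_univ_two, vecMul_diagonal] <;> ring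
  rw [hdiag, Matrix.exp_conj U _ hU, exp_diagonal, hUinv]
  ext i j
  fin_cases i <;> fin_cases j <;>
    simp [U, symmStochastic, mul_apply, Fin.sum_univ_two, vecMul_diagonal, ← Real.exp_eq_exp_ℝ,
      Pi.exp_def] <;> ring

lemma exp_smul_symmStochastic_sub_one (k a : ℝ) :
    NormedSpace.exp (k • (symmStochastic a - 1))
      = symmStochastic ((1 + Real.exp (-2 * (k * (1 - a)))) / 2) := by
  rw [symmStochastic_sub_one, smul_smul, exp_smul_twoStateGenerator]

lemma rowSumNorm_symmStochastic_sub (a b : ℝ) :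
    rowSumNorm (symmStochastic a - symmStochastic b) = 2 * |a - b| := by
  simp [rowSumNorm, symmStochastic]
  rw [abs_sub_comm b a, max_self]
  ring

lemma exp_neg_one_sub_div_lt {p : ℝ} (hp0 : 0 < p) (hp1 : p < 1) :
    Real.exp (-((1 - p) / p)) < p := by
  have hlog := Real.log_lt_sub_one_of_pos (inv_pos.2 hp0) (inv_ne_one.2 hp1.ne)
  rw [Real.log_inv] at hlog
  calc Real.exp (-((1 - p) / p)) < Real.exp (Real.log p) := by
        rw [Real.exp_lt_exp]
        field_simp at hlog ⊢
        linarith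
    _ = p := Real.exp_log hp0

lemma sub_sq_lt_exp_neg_two_mul {p : ℝ} (hp0 : 0 < p) (hp1 : p < 1) :
    2 * p - 1 - (1 - p) ^ 2 < Real.exp (-2 * ((1 - p) / p)) := by
  rcases le_or_gt p (1 / 2) with hp | hp
  · nlinarith [Real.exp_pos (-2 * ((1 - p) / p))]
  have hlin : (2 * p - 1) / p ≤ Real.exp (-((1 - p) / p)) := by
    calc (2 * p - 1) / p = -((1 - p) / p) + 1 := by field_simp; ring
      _ ≤ _ := Real.add_one_le_exp _
  have hsq : ((2 * p - 1) / p) ^ 2 ≤ Real.exp (-2 * ((1 - p) / p)) := by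
    rw [show -2 * ((1 - p) / p) = -((1 - p) / p) + -((1 - p) / p) by ring, Real.exp_add, ← sq]
    exact pow_le_pow_left₀ (div_nonneg (by linarith) hp0.le) hlin 2
  have hgap : ((2 * p - 1) / p) ^ 2 = 2 * p - 1 - (1 - p) ^ 2 + (1 - p) ^ 4 / p ^ 2 := by
    field_simp; ring
  have : 0 < (1 - p) ^ 4 / p ^ 2 := by positivity
  linarith

lemma abs_sub_exp_lt_sq {p : ℝ} (hp0 : 0 < p) (hp1 : p < 1) :
    |2 * p - 1 - Real.exp (-2 * ((1 - p) / p))| < (1 - p) ^ 2 := by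
  have hupper : Real.exp (-2 * ((1 - p) / p)) < p ^ 2 := by
    calc Real.exp (-2 * ((1 - p) / p)) = Real.exp (-((1 - p) / p)) ^ 2 := by
          rw [sq, ← Real.exp_add]; ring_nf
      _ < p ^ 2 := by gcongr; exact exp_neg_one_sub_div_lt hp0 hp1
  rw [abs_lt]
  constructor <;> nlinarith [sub_sq_lt_exp_neg_two_mul hp0 hp1]

theorem two_by_two_compare (p : ℝ) (hp0 : 0 < p) (hp1 : p < 1) :
    rowSumNorm (!![p, 1 - p; 1 - p, p]
        - NormedSpace.exp ((1 / p) • (!![p, 1 - p; 1 - p, p] - (1 : Matrix (Fin 2) (Fin 2) ℝ))))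
      < rowSumNorm (!![p, 1 - p; 1 - p, p]
        - NormedSpace.exp ((Real.log p / (p - 1)) • (!![p, 1 - p; 1 - p, p] - (1 : Matrix (Fin 2) (Fin 2) ℝ)))) := by
  change rowSumNorm (symmStochastic p - NormedSpace.exp ((1 / p) • (symmStochastic p - 1)))
    < rowSumNorm (symmStochastic p - NormedSpace.exp ((Real.log p / (p - 1)) • (symmStochastic p - 1)))
  have hk : 1 / p * (1 - p) = (1 - p) / p := by ring
  have hlog : Real.exp (-2 * (Real.log p / (p - 1) * (1 - p))) = p ^ 2 := by
    rw [show -2 * (Real.log p / (p - 1) * (1 - p)) = 2 * Real.log p by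
      field_simp [sub_ne_zero.2 hp1.ne]; ring, two_mul, Real.exp_add, Real.exp_log hp0, sq]
  simp only [exp_smul_symmStochastic_sub_one, rowSumNorm_symmStochastic_sub, hk, hlog]
  set t := Real.exp (-2 * ((1 - p) / p))
  calc 2 * |p - (1 + t) / 2| = |2 * p - 1 - t| := by
        rw [show 2 * p - 1 - t = 2 * (p - (1 + t) / 2) by ring, abs_mul, abs_two]
    _ < (1 - p) ^ 2 := abs_sub_exp_lt_sq hp0 hp1
    _ = 2 * |p - (1 + p ^ 2) / 2| := by
      rw [show p - (1 + p ^ 2) / 2 = -((1 - p) ^ 2 / 2) by ring, abs_neg,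
        abs_of_nonneg (by positivity)]
      ring
end

section
/- Let 0 < p < 1. Then (1/2)(1 - e^{1-1/p})² < (1 - p)². -/
/-!
With `t = 1/p - 1 > 0` the claim compares `1 - e^{-t}` with `1 - p = t / (1 + t)`.
The function `(1 + t) e^{-t}` has derivative `-t e^{-t} ≥ -1/e`, so
`(1 + t) e^{-t} ≥ 1 - t/e`, i.e. `1 - e^{1 - 1/p} ≤ (1 + 1/e)(1 - p)`;
and `(1 + 1/e)² < 2`.
-/

open Real

lemma monotone_one_add_mul_exp_neg_add_mul_exp_neg_one :
    Monotone fun t : ℝ ↦ (1 + t) * exp (-t) + t * exp (-1) := by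
  refine monotone_of_hasDerivAt_nonneg (f' := fun t ↦ -(t * exp (-t)) + exp (-1))
    (fun t ↦ ?_) (fun t ↦ by simpa using mul_exp_neg_le_exp_neg_one t)
  refine ((((hasDerivAt_id' t).const_add 1).mul (hasDerivAt_neg t).exp).add
    ((hasDerivAt_id' t).mul_const (exp (-1)))).congr_deriv ?_
  ring

lemma one_sub_mul_exp_neg_one_le_one_add_mul_exp_neg {t : ℝ} (ht : 0 ≤ t) :
    1 - t * exp (-1) ≤ (1 + t) * exp (-t) := by
  have h := monotone_one_add_mul_exp_neg_add_mul_exp_neg_one ht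
  simp only [add_zero, neg_zero, exp_zero, mul_one, zero_mul] at h
  linarith

lemma one_sub_exp_one_sub_one_div_le {p : ℝ} (hp0 : 0 < p) (hp1 : p ≤ 1) :
    1 - exp (1 - 1 / p) ≤ (1 + exp (-1)) * (1 - p) := by
  have ht : 0 ≤ 1 / p - 1 := by rw [sub_nonneg, le_div_iff₀ hp0]; linarith
  have h := one_sub_mul_exp_neg_one_le_one_add_mul_exp_neg ht
  rw [neg_sub, add_sub_cancel, ← mul_le_mul_iff_of_pos_left hp0] at h
  rw [← mul_assoc, mul_one_div_cancel hp0.ne', one_mul] at h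
  have hp : p * ((1 / p - 1) * exp (-1)) = (1 - p) * exp (-1) := by field_simp
  rw [mul_sub, mul_one, hp] at h
  linarith

theorem sq_ineq (p : ℝ) (hp0 : 0 < p) (hp1 : p < 1) :
    1 / 2 * (1 - Real.exp (1 - 1 / p)) ^ 2 < (1 - p) ^ 2 := by
  have hpos : 0 < 1 - exp (1 - 1 / p) := by
    rw [sub_pos, exp_lt_one_iff, sub_neg, lt_div_iff₀ hp0]; linarith
  have hle := one_sub_exp_one_sub_one_div_le hp0 hp1.le
  have hc : (1 + exp (-1)) ^ 2 < 2 := by nlinarith [exp_neg_one_lt_d9, exp_pos (-1)]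
  have h1p : 0 < (1 - p) ^ 2 := pow_pos (sub_pos.2 hp1) 2
  calc 1 / 2 * (1 - exp (1 - 1 / p)) ^ 2
      ≤ 1 / 2 * ((1 + exp (-1)) * (1 - p)) ^ 2 := by gcongr
    _ = 1 / 2 * (1 + exp (-1)) ^ 2 * (1 - p) ^ 2 := by ring
    _ < (1 - p) ^ 2 := by nlinarith
end
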